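/- Let d ≡ 1 (mod 8) be a square-free integer with d ∉ {0,1}, and let I = {a + b√d ∈ Z[√d] : a ≡ b (mod 2)}. Then I is an ideal of Z[√d] of index 2, hence a maximal ideal, and it is the unique prime ideal of Z[√d] containing 2. -/

import Mathlib

/-!
Since `d` is odd, `X ↦ 1` defines a surjection `ℤ[√d] → ℤ/2` sending `a + b√d` to `a + b`;
its kernel is `I`, so `I` is maximal of index 2. If a prime `P` contains 2, it also contains
`1 + √d`, because `(1 + √d)² = 2 ((d + 1)/2 + √d)`. Every `a + b√d ∈ I` is
`(a - b) + b (1 + √d)`, so `I ⊆ P`, and maximality of `I` forces `P = I`.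
-/

open Polynomial

lemma ZMod.intCast_add_intCast_eq_zero_iff_modEq_two {a b : ℤ} :
    (a : ZMod 2) + b = 0 ↔ a ≡ b [ZMOD 2] := by
  rw [CharTwo.add_eq_zero]
  exact_mod_cast ZMod.intCast_eq_intCast_iff a b 2

noncomputable section

abbrev IntSqrtQuot (d : ℤ) : Type := ℤ[X] ⧸ Ideal.span {(X : ℤ[X]) ^ 2 - C d}

namespace IntSqrtQuot

variable {d : ℤ}

abbrev root (d : ℤ) : IntSqrtQuot d := Ideal.Quotient.mk _ X

lemma mk_C (a : ℤ) : (Ideal.Quotient.mk _ (C a) : IntSqrtQuot d) = a := by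
  rw [eq_intCast C a, map_intCast]

lemma root_sq : root d ^ 2 = d := by
  rw [← map_pow, ← mk_C, Ideal.Quotient.eq]
  exact Ideal.subset_span rfl

lemma exists_eq_intCast_add_intCast_mul_root (z : IntSqrtQuot d) :
    ∃ a b : ℤ, z = a + b * root d := by
  obtain ⟨p, rfl⟩ := Ideal.Quotient.mk_surjective z
  have hmonic : ((X : ℤ[X]) ^ 2 - C d).Monic := monic_X_pow_sub_C d two_ne_zero
  have hpr : (Ideal.Quotient.mk _ p : IntSqrtQuot d) =
      Ideal.Quotient.mk _ (p %ₘ (X ^ 2 - C d)) := by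
    rw [Ideal.Quotient.eq, modByMonic_eq_sub_mul_div p, sub_sub_cancel]
    exact Ideal.mul_mem_right _ _ (Ideal.subset_span rfl)
  set r := p %ₘ (X ^ 2 - C d)
  have hdeg : r.degree ≤ 1 := by
    have hlt := degree_modByMonic_lt p hmonic
    rw [degree_X_pow_sub_C two_pos d] at hlt
    exact Order.le_of_lt_succ (by exact_mod_cast hlt)
  refine ⟨r.coeff 0, r.coeff 1, ?_⟩
  rw [hpr]
  nth_rw 1 [eq_X_add_C_of_degree_le_one hdeg]
  rw [map_add, map_mul, mk_C, mk_C, add_comm]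

lemma one_add_root_sq : (1 + root d) ^ 2 = d + 1 + 2 * root d := by
  linear_combination (root_sq : root d ^ 2 = d)

def toZModTwo (hd : Odd d) : IntSqrtQuot d →+* ZMod 2 :=
  Ideal.Quotient.lift _ (eval₂RingHom (Int.castRingHom (ZMod 2)) 1) <| by
    refine fun p hp => RingHom.mem_ker.1 ((Ideal.span_singleton_le_iff_mem _).2 ?_ hp)
    simp [RingHom.mem_ker, hd.intCast_zmod_two]

lemma one_add_root_mem_of_two_mem (hd : Odd d) {P : Ideal (IntSqrtQuot d)} (hP : P.IsPrime)
    (h2 : (2 : IntSqrtQuot d) ∈ P) : 1 + root d ∈ P := by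
  obtain ⟨k, rfl⟩ := hd
  refine hP.mem_of_pow_mem 2 ?_
  have hsq : (1 + root (2 * k + 1)) ^ 2 = 2 * ((k + 1 : ℤ) + root (2 * k + 1)) := by
    rw [one_add_root_sq]
    push_cast
    ring
  rw [hsq]
  exact P.mul_mem_right _ h2

variable (hd : Odd d)

lemma toZModTwo_intCast_add_intCast_mul_root (a b : ℤ) :
    toZModTwo hd (a + b * root d) = a + b := by
  simp [toZModTwo]

lemma toZModTwo_surjective : Function.Surjective (toZModTwo hd) := fun y => by
  obtain ⟨n, rfl⟩ := ZMod.intCast_surjective y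
  exact ⟨n, map_intCast _ n⟩

lemma coe_ker_toZModTwo :
    (RingHom.ker (toZModTwo hd) : Set (IntSqrtQuot d)) =
      {z | ∃ a b : ℤ, a ≡ b [ZMOD 2] ∧ z = a + b * root d} := by
  ext z
  simp only [SetLike.mem_coe, RingHom.mem_ker]
  constructor
  · intro hz
    obtain ⟨a, b, rfl⟩ := exists_eq_intCast_add_intCast_mul_root z
    rw [toZModTwo_intCast_add_intCast_mul_root,
      ZMod.intCast_add_intCast_eq_zero_iff_modEq_two] at hz
    exact ⟨a, b, hz, rfl⟩
  · rintro ⟨a, b, hab, rfl⟩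
    rwa [toZModTwo_intCast_add_intCast_mul_root, ZMod.intCast_add_intCast_eq_zero_iff_modEq_two]

lemma nat_card_quotient_ker_toZModTwo :
    Nat.card (IntSqrtQuot d ⧸ RingHom.ker (toZModTwo hd)) = 2 := by
  rw [Nat.card_congr (RingHom.quotientKerEquivOfSurjective (toZModTwo_surjective hd)).toEquiv,
    Nat.card_zmod]

lemma ker_toZModTwo_le_of_two_mem {P : Ideal (IntSqrtQuot d)} (hP : P.IsPrime)
    (h2 : (2 : IntSqrtQuot d) ∈ P) : RingHom.ker (toZModTwo hd) ≤ P := by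
  intro z hz
  rw [← SetLike.mem_coe, coe_ker_toZModTwo] at hz
  obtain ⟨a, b, hab, rfl⟩ := hz
  obtain ⟨c, hc⟩ := hab.dvd
  have hz : (a + b * root d : IntSqrtQuot d) = 2 * (-c : ℤ) + b * (1 + root d) := by
    rw [show a = 2 * -c + b by omega]
    push_cast
    ring
  rw [hz]
  exact add_mem (P.mul_mem_right _ h2) (P.mul_mem_left _ (one_add_root_mem_of_two_mem hd hP h2))

end IntSqrtQuot

end

open Polynomial in
theorem ideal_I_maximal_unique_prime_over_two_general (d : ℤ) (hd8 : d % 8 = 1) :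
    ∃ I : Ideal (Polynomial ℤ ⧸ Ideal.span {(X : Polynomial ℤ) ^ 2 - C d}),
      (I : Set (Polynomial ℤ ⧸ Ideal.span {(X : Polynomial ℤ) ^ 2 - C d})) =
        {z | ∃ a b : ℤ, a ≡ b [ZMOD 2] ∧
          z = (a : Polynomial ℤ ⧸ Ideal.span {(X : Polynomial ℤ) ^ 2 - C d}) +
              (b : Polynomial ℤ ⧸ Ideal.span {(X : Polynomial ℤ) ^ 2 - C d}) *
                Ideal.Quotient.mk (Ideal.span {(X : Polynomial ℤ) ^ 2 - C d}) X} ∧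
      Nat.card ((Polynomial ℤ ⧸ Ideal.span {(X : Polynomial ℤ) ^ 2 - C d}) ⧸ I) = 2 ∧
      I.IsMaximal ∧
      ∀ P : Ideal (Polynomial ℤ ⧸ Ideal.span {(X : Polynomial ℤ) ^ 2 - C d}),
        P.IsPrime → (2 : Polynomial ℤ ⧸ Ideal.span {(X : Polynomial ℤ) ^ 2 - C d}) ∈ P →
          P = I := by
  have hd : Odd d := Int.odd_iff.2 (by omega)
  have hmax := RingHom.ker_isMaximal_of_surjective _ (IntSqrtQuot.toZModTwo_surjective hd)
  refine ⟨RingHom.ker (IntSqrtQuot.toZModTwo hd), IntSqrtQuot.coe_ker_toZModTwo hd,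
    IntSqrtQuot.nat_card_quotient_ker_toZModTwo hd, hmax, fun P hP h2 => ?_⟩
  exact (hmax.eq_of_le hP.ne_top (IntSqrtQuot.ker_toZModTwo_le_of_two_mem hd hP h2)).symm

open Polynomial in
/-- For a square-free integer `d ≡ 1 (mod 8)`, `d ∉ {0,1}`, the set
`I = {a + b√d : a ≡ b (mod 2)}` is an ideal of `ℤ[√d] = ℤ[X]/(X²-d)` of index 2,
hence maximal, and it is the unique prime ideal containing 2. -/
theorem ideal_I_maximal_unique_prime_over_two (d : ℤ) (hsf : Squarefree d)
    (hd0 : d ≠ 0) (hd1 : d ≠ 1) (hd8 : d % 8 = 1) :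
    ∃ I : Ideal (Polynomial ℤ ⧸ Ideal.span {(X : Polynomial ℤ) ^ 2 - C d}),
      (I : Set (Polynomial ℤ ⧸ Ideal.span {(X : Polynomial ℤ) ^ 2 - C d})) =
        {z | ∃ a b : ℤ, a ≡ b [ZMOD 2] ∧
          z = (a : Polynomial ℤ ⧸ Ideal.span {(X : Polynomial ℤ) ^ 2 - C d}) +
              (b : Polynomial ℤ ⧸ Ideal.span {(X : Polynomial ℤ) ^ 2 - C d}) *
                Ideal.Quotient.mk (Ideal.span {(X : Polynomial ℤ) ^ 2 - C d}) X} ∧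
      Nat.card ((Polynomial ℤ ⧸ Ideal.span {(X : Polynomial ℤ) ^ 2 - C d}) ⧸ I) = 2 ∧
      I.IsMaximal ∧
      ∀ P : Ideal (Polynomial ℤ ⧸ Ideal.span {(X : Polynomial ℤ) ^ 2 - C d}),
        P.IsPrime → (2 : Polynomial ℤ ⧸ Ideal.span {(X : Polynomial ℤ) ^ 2 - C d}) ∈ P →
          P = I :=
  ideal_I_maximal_unique_prime_over_two_general d hd8
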